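/- Let {B_{a|x}} be a measurement assemblage, E a positive linear map on d×d matrices, and ρ a density matrix with p = tr[E(ρ)] > 0. Then SR( ρ^{1/2} E†(B) ρ^{1/2} / p ) ≤ IR(B), where E†(B) denotes the family {E†(B_{a|x})}. -/

import Mathlib

open Matrix Kronecker BigOperators ComplexOrder

noncomputable section

/-- A density matrix: positive semidefinite with unit trace. -/
def IsDensity {d : ℕ} (ρ : Matrix (Fin d) (Fin d) ℂ) : Prop :=
  ρ.PosSemidef ∧ ρ.trace = 1

/-- A POVM: positive semidefinite effects summing to the identity. -/
def IsPOVM {d nl : ℕ} (G : Fin nl → Matrix (Fin d) (Fin d) ℂ) : Prop :=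
  (∀ l, (G l).PosSemidef) ∧ ∑ l, G l = 1

/-- A measurement assemblage: for each setting `x`, a POVM `a ↦ M x a`. -/
def IsMA {d na nx : ℕ} (M : Fin nx → Fin na → Matrix (Fin d) (Fin d) ℂ) : Prop :=
  (∀ x a, (M x a).PosSemidef) ∧ ∀ x, ∑ a, M x a = 1

/-- Joint measurability: `M x a = ∑ λ p(a|x,λ) G λ` for a parent POVM `G`. -/
def JM {d na nx : ℕ} (M : Fin nx → Fin na → Matrix (Fin d) (Fin d) ℂ) : Prop :=
  ∃ (nl : ℕ) (G : Fin nl → Matrix (Fin d) (Fin d) ℂ)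
    (p : Fin nx → Fin na → Fin nl → ℝ),
    IsPOVM G ∧ (∀ x a l, 0 ≤ p x a l) ∧ (∀ x l, ∑ a, p x a l = 1) ∧
    ∀ x a, M x a = ∑ l, (p x a l : ℂ) • G l

/-- A state assemblage: PSD elements with an `x`-independent reduced density matrix. -/
def IsSA {d na nx : ℕ} (σ : Fin nx → Fin na → Matrix (Fin d) (Fin d) ℂ) : Prop :=
  (∀ x a, (σ x a).PosSemidef) ∧
  ∃ ρ : Matrix (Fin d) (Fin d) ℂ, IsDensity ρ ∧ ∀ x, ∑ a, σ x a = ρ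

/-- Local-hidden-state model: `σ x a = ∑ λ q(λ) p(a|x,λ) ρ_λ`. -/
def LHS {d na nx : ℕ} (σ : Fin nx → Fin na → Matrix (Fin d) (Fin d) ℂ) : Prop :=
  ∃ (nl : ℕ) (q : Fin nl → ℝ) (p : Fin nx → Fin na → Fin nl → ℝ)
    (ρ : Fin nl → Matrix (Fin d) (Fin d) ℂ),
    (∀ l, 0 ≤ q l) ∧ (∑ l, q l = 1) ∧
    (∀ x a l, 0 ≤ p x a l) ∧ (∀ x l, ∑ a, p x a l = 1) ∧
    (∀ l, IsDensity (ρ l)) ∧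
    ∀ x a, σ x a = ∑ l, ((q l * p x a l : ℝ) : ℂ) • ρ l

/-- Incompatibility robustness. -/
def IR {d na nx : ℕ} (B : Fin nx → Fin na → Matrix (Fin d) (Fin d) ℂ) : ℝ :=
  sInf {t : ℝ | 0 ≤ t ∧ ∃ N, IsMA N ∧
    JM (fun x a => (((1 + t : ℝ))⁻¹ : ℂ) • (B x a + (t : ℂ) • N x a))}

/-- Steering robustness. -/
def SR {d na nx : ℕ} (σ : Fin nx → Fin na → Matrix (Fin d) (Fin d) ℂ) : ℝ :=
  sInf {t : ℝ | 0 ≤ t ∧ ∃ ξ, IsSA ξ ∧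
    LHS (fun x a => (((1 + t : ℝ))⁻¹ : ℂ) • (σ x a + (t : ℂ) • ξ x a))}

/-- Incompatible weight. -/
def IW {d na nx : ℕ} (B : Fin nx → Fin na → Matrix (Fin d) (Fin d) ℂ) : ℝ :=
  sInf {t : ℝ | 0 ≤ t ∧ t ≤ 1 ∧ ∃ N O, IsMA N ∧ JM O ∧
    ∀ x a, B x a = (t : ℂ) • N x a + ((1 - t : ℝ) : ℂ) • O x a}

/-- Steerable weight. -/
def SW {d na nx : ℕ} (σ : Fin nx → Fin na → Matrix (Fin d) (Fin d) ℂ) : ℝ :=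
  sInf {t : ℝ | 0 ≤ t ∧ t ≤ 1 ∧ ∃ ξ τ, IsSA ξ ∧ LHS τ ∧
    ∀ x a, σ x a = (t : ℂ) • ξ x a + ((1 - t : ℝ) : ℂ) • τ x a}

/-- Positive map on matrices. -/
def PosMap {d : ℕ} (E : Matrix (Fin d) (Fin d) ℂ →ₗ[ℂ] Matrix (Fin d) (Fin d) ℂ) : Prop :=
  ∀ X, X.PosSemidef → (E X).PosSemidef

/-- Trace-nonincreasing on PSD matrices. -/
def TNI {d : ℕ} (E : Matrix (Fin d) (Fin d) ℂ →ₗ[ℂ] Matrix (Fin d) (Fin d) ℂ) : Prop :=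
  ∀ X : Matrix (Fin d) (Fin d) ℂ, X.PosSemidef → (E X).trace.re ≤ X.trace.re

/-- `Ed` is the Hilbert–Schmidt adjoint of `E`. -/
def IsAdjoint {d : ℕ} (E Ed : Matrix (Fin d) (Fin d) ℂ →ₗ[ℂ] Matrix (Fin d) (Fin d) ℂ) : Prop :=
  ∀ X Y, ((E X)ᴴ * Y).trace = (Xᴴ * (Ed Y)).trace

/-- Partial trace over the first tensor factor. -/
def ptraceA {d d' : ℕ} (M : Matrix (Fin d × Fin d') (Fin d × Fin d') ℂ) :
    Matrix (Fin d') (Fin d') ℂ :=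
  Matrix.of fun i j => ∑ k : Fin d, M (k, i) (k, j)

/-- The map `E ⊗ id` acting on bipartite matrices. -/
def tensId {d d' : ℕ} (E : Matrix (Fin d) (Fin d) ℂ →ₗ[ℂ] Matrix (Fin d) (Fin d) ℂ)
    (M : Matrix (Fin d × Fin d') (Fin d × Fin d') ℂ) :
    Matrix (Fin d × Fin d') (Fin d × Fin d') ℂ :=
  Matrix.of fun p q => E (Matrix.of fun i k => M (i, p.2) (k, q.2)) p.1 q.1

/-- The square root of a positive semidefinite matrix, as Mathlib (Dec 2024) defined it. -/
def Matrix.PosSemidef.sqrt {n 𝕜 : Type*} [Fintype n] [DecidableEq n] [RCLike 𝕜]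
    {A : Matrix n n 𝕜} (hA : A.PosSemidef) : Matrix n n 𝕜 :=
  hA.1.eigenvectorUnitary.1 * diagonal ((↑) ∘ (√·) ∘ hA.1.eigenvalues) *
    (star hA.1.eigenvectorUnitary : Matrix n n 𝕜)

/-!
The filter `T Y = p⁻¹ • ρ^{1/2} E†(Y) ρ^{1/2}` is a positive linear map (the adjoint of a positive
map is positive) with `tr T(1) = tr E(ρ) / p = 1`. Any such map sends measurement assemblages to
state assemblages with reduced state `T(1)`, and jointly measurable ones to LHS assemblages: the
parent POVM element `G λ` goes to `q λ • ρ λ` with `q λ = tr T(G λ)`. By linearity, a feasible pair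
`(t, N)` for `IR B` gives the feasible pair `(t, T ∘ N)` for `SR (T ∘ B)`, and the infimum
inequality follows once the feasible set of `IR B` is known to be nonempty.
-/

namespace Matrix

variable {n 𝕜 : Type*} [Fintype n] [RCLike 𝕜]

lemma PosSemidef.ofReal_re_trace {A : Matrix n n ℂ} (hA : A.PosSemidef) :
    (A.trace.re : ℂ) = A.trace :=
  Complex.ext rfl (Complex.nonneg_iff.mp hA.trace_nonneg).2

variable [DecidableEq n]

lemma PosSemidef.posSemidef_sqrt {A : Matrix n n 𝕜} (hA : A.PosSemidef) : hA.sqrt.PosSemidef := by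
  rw [PosSemidef.sqrt, star_eq_conjTranspose]
  refine PosSemidef.mul_mul_conjTranspose_same (PosSemidef.diagonal fun i => ?_) _
  simp

lemma PosSemidef.sqrt_mul_self {A : Matrix n n 𝕜} (hA : A.PosSemidef) : hA.sqrt * hA.sqrt = A := by
  set U : Matrix n n 𝕜 := (hA.1.eigenvectorUnitary : Matrix n n 𝕜)
  have hU : star U * U = 1 := Unitary.coe_star_mul_self _
  conv_rhs => rw [hA.1.spectral_theorem, Unitary.conjStarAlgAut_apply]
  rw [PosSemidef.sqrt, mul_assoc, ← mul_assoc (star U), ← mul_assoc (star U), hU, one_mul,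
    ← mul_assoc (U * _), mul_assoc U, diagonal_mul_diagonal]
  congr 3
  funext i
  simp [← RCLike.ofReal_mul, Real.mul_self_sqrt (hA.eigenvalues_nonneg i)]

lemma PosSemidef.trace_mul_nonneg {A B : Matrix n n 𝕜} (hA : A.PosSemidef) (hB : B.PosSemidef) :
    0 ≤ (A * B).trace := by
  have hS := hA.posSemidef_sqrt
  rw [← hA.sqrt_mul_self, mul_assoc, trace_mul_comm]
  nth_rw 2 [← hS.1.eq]
  exact (hB.mul_mul_conjTranspose_same _).trace_nonneg

lemma posSemidef_of_forall_dotProduct_mulVec_nonneg {A : Matrix n n ℂ}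
    (h : ∀ x, 0 ≤ star x ⬝ᵥ (A *ᵥ x)) : A.PosSemidef := by
  rw [← isPositive_toEuclideanLin_iff, LinearMap.isPositive_iff_complex]
  intro x
  obtain ⟨hre, him⟩ := Complex.nonneg_iff.mp (h x.ofLp)
  rw [← inner_conj_symm, EuclideanSpace.inner_eq_star_dotProduct, ofLp_toLpLin, toLin'_apply,
    dotProduct_comm]
  exact ⟨Complex.ext (by simp) (by simp [← him]), by simpa using hre⟩

lemma PosSemidef.exists_isDensity_smul_eq {d : ℕ} {A σ₀ : Matrix (Fin d) (Fin d) ℂ}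
    (hA : A.PosSemidef) (hσ₀ : IsDensity σ₀) :
    ∃ σ, IsDensity σ ∧ A = (A.trace.re : ℂ) • σ := by
  set r := A.trace.re
  have hr : (r : ℂ) = A.trace := hA.ofReal_re_trace
  by_cases h : r = 0
  · refine ⟨σ₀, hσ₀, ?_⟩
    rw [h, Complex.ofReal_zero, zero_smul, ← hA.trace_eq_zero_iff, ← hr, h, Complex.ofReal_zero]
  · have hrC : (r : ℂ) ≠ 0 := Complex.ofReal_ne_zero.mpr h
    refine ⟨(r : ℂ)⁻¹ • A, ⟨hA.smul ?_, ?_⟩, ?_⟩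
    · rw [← Complex.ofReal_inv]
      exact Complex.zero_le_real.mpr (inv_nonneg.mpr (Complex.nonneg_iff.mp hA.trace_nonneg).1)
    · rw [trace_smul, smul_eq_mul, ← hr, inv_mul_cancel₀ hrC]
    · rw [smul_smul, mul_inv_cancel₀ hrC, one_smul]

end Matrix

section PosMap

variable {d : ℕ} {E Ed : Matrix (Fin d) (Fin d) ℂ →ₗ[ℂ] Matrix (Fin d) (Fin d) ℂ}

lemma IsAdjoint.posMap (hE : PosMap E) (hadj : IsAdjoint E Ed) : PosMap Ed := by
  intro Y hY
  refine posSemidef_of_forall_dotProduct_mulVec_nonneg fun v => ?_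
  set P := vecMulVec v (star v)
  have hP : P.PosSemidef := posSemidef_vecMulVec_self_star v
  calc 0 ≤ (E P * Y).trace := (hE P hP).trace_mul_nonneg hY
    _ = (P * Ed Y).trace := by rw [← (hE P hP).1.eq, hadj, hP.1.eq]
    _ = star v ⬝ᵥ (Ed Y *ᵥ v) := by
      rw [trace_mul_comm, mul_vecMulVec, trace_vecMulVec, dotProduct_comm]

lemma PosMap.smul (hE : PosMap E) {c : ℝ} (hc : 0 ≤ c) : PosMap ((c : ℂ) • E) :=
  fun X hX => (hE X hX).smul (Complex.zero_le_real.mpr hc)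

lemma PosMap.conj (hE : PosMap E) (S : Matrix (Fin d) (Fin d) ℂ) :
    PosMap (LinearMap.mulLeft ℂ Sᴴ ∘ₗ LinearMap.mulRight ℂ S ∘ₗ E) := fun X hX => by
  simpa [mul_assoc] using (hE X hX).conjTranspose_mul_mul_same S

end PosMap

section Assemblage

variable {d na nx : ℕ} {T : Matrix (Fin d) (Fin d) ℂ →ₗ[ℂ] Matrix (Fin d) (Fin d) ℂ}

lemma IsMA.isSA_map (hT : PosMap T) (hT1 : (T 1).trace = 1)
    {N : Fin nx → Fin na → Matrix (Fin d) (Fin d) ℂ} (hN : IsMA N) :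
    IsSA (fun x a => T (N x a)) :=
  ⟨fun x a => hT _ (hN.1 x a), T 1, ⟨hT 1 PosSemidef.one, hT1⟩,
    fun x => by rw [← map_sum, hN.2 x]⟩

lemma JM.lhs_map (hT : PosMap T) (hT1 : (T 1).trace = 1)
    {M : Fin nx → Fin na → Matrix (Fin d) (Fin d) ℂ} (hM : JM M) :
    LHS (fun x a => T (M x a)) := by
  obtain ⟨nl, G, p, hG, hp0, hp1, hMG⟩ := hM
  have hTG : ∀ l, (T (G l)).PosSemidef := fun l => hT _ (hG.1 l)
  choose σ hσ hTσ using fun l => (hTG l).exists_isDensity_smul_eq ⟨hT 1 PosSemidef.one, hT1⟩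
  refine ⟨nl, fun l => (T (G l)).trace.re, p, σ,
    fun l => (Complex.nonneg_iff.mp (hTG l).trace_nonneg).1, ?_, hp0, hp1, hσ, fun x a => ?_⟩
  · rw [← Complex.re_sum, ← trace_sum, ← map_sum, hG.2, hT1, Complex.one_re]
  · dsimp only
    rw [hMG x a, map_sum]
    refine Finset.sum_congr rfl fun l _ => ?_
    conv_lhs => rw [map_smul, hTσ l]
    rw [smul_smul, Complex.ofReal_mul, mul_comm]

lemma IsMA.na_ne_zero {B : Fin nx → Fin na → Matrix (Fin d) (Fin d) ℂ} (hB : IsMA B)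
    (h10 : (1 : Matrix (Fin d) (Fin d) ℂ) ≠ 0) (x : Fin nx) : na ≠ 0 := by
  rintro rfl
  simpa using (hB.2 x).symm.trans_ne h10.symm

lemma jm_uniform (hna : Fin nx → na ≠ 0) :
    JM (fun (_ : Fin nx) (_ : Fin na) => (na : ℂ)⁻¹ • (1 : Matrix (Fin d) (Fin d) ℂ)) :=
  ⟨1, fun _ => 1, fun _ _ _ => (na : ℝ)⁻¹, ⟨fun _ => PosSemidef.one, by simp⟩,
    fun _ _ _ => by positivity, fun x _ => by simp [hna x], fun _ _ => by simp⟩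

lemma IsMA.nonempty_irFeasible {B : Fin nx → Fin na → Matrix (Fin d) (Fin d) ℂ} (hB : IsMA B)
    (h10 : (1 : Matrix (Fin d) (Fin d) ℂ) ≠ 0) :
    {t : ℝ | 0 ≤ t ∧ ∃ N, IsMA N ∧
      JM (fun x a => (((1 + t : ℝ))⁻¹ : ℂ) • (B x a + (t : ℂ) • N x a))}.Nonempty := by
  have hna : Fin nx → na ≠ 0 := hB.na_ne_zero h10
  have hnaC : Fin nx → (na : ℂ) ≠ 0 := fun x => Nat.cast_ne_zero.mpr (hna x)
  have hinv : (0 : ℂ) ≤ (na : ℂ)⁻¹ := by positivity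
  have hcompl : ∀ x a, 1 - B x a = ∑ a' ∈ Finset.univ.erase a, B x a' := fun x a => by
    rw [← hB.2 x, ← Finset.add_sum_erase _ _ (Finset.mem_univ a), add_sub_cancel_left]
  have hN : IsMA fun x a => (na : ℂ)⁻¹ • ((na : ℂ)⁻¹ • 1 + (1 - B x a)) := by
    refine ⟨fun x a => ?_, fun x => ?_⟩
    · beta_reduce
      rw [hcompl]
      exact ((PosSemidef.one.smul hinv).add (posSemidef_sum _ fun a' _ => hB.1 x a')).smul hinv
    · simp only [← Finset.smul_sum, Finset.sum_add_distrib, Finset.sum_sub_distrib, hB.2 x,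
        Finset.sum_const, Finset.card_univ, Fintype.card_fin, ← Nat.cast_smul_eq_nsmul ℂ]
      match_scalars
      field_simp [hnaC x]
      ring
  -- with `t = na` this noise turns `B` into the uniform measurement `1 / na`
  refine ⟨na, Nat.cast_nonneg _, _, hN, ?_⟩
  convert jm_uniform (d := d) hna using 3 with x a
  push_cast
  rw [smul_smul, mul_inv_cancel₀ (hnaC x), one_smul, add_left_comm, add_sub_cancel]
  match_scalars
  field_simp [hnaC x]

theorem sr_map_le_ir (hT : PosMap T) (hT1 : (T 1).trace = 1)
    {B : Fin nx → Fin na → Matrix (Fin d) (Fin d) ℂ} (hB : IsMA B) :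
    SR (fun x a => T (B x a)) ≤ IR B := by
  have h10 : (1 : Matrix (Fin d) (Fin d) ℂ) ≠ 0 := fun h => by simp [h] at hT1
  refine csInf_le_csInf ⟨0, fun t ht => ht.1⟩ (hB.nonempty_irFeasible h10) ?_
  rintro t ⟨ht, N, hN, hJM⟩
  refine ⟨ht, _, hN.isSA_map hT hT1, ?_⟩
  simpa only [map_smul, map_add] using hJM.lhs_map hT hT1

end Assemblage

theorem sr_filtered_heisenberg_le_ir_general {d na nx : ℕ}
    (B : Fin nx → Fin na → Matrix (Fin d) (Fin d) ℂ) (hB : IsMA B)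
    (E Ed : Matrix (Fin d) (Fin d) ℂ →ₗ[ℂ] Matrix (Fin d) (Fin d) ℂ)
    (hE : PosMap E) (hadj : IsAdjoint E Ed)
    (ρ : Matrix (Fin d) (Fin d) ℂ) (hρ : ρ.PosSemidef)
    (hp : 0 < (E ρ).trace.re) :
    SR (fun x a => ((((E ρ).trace.re)⁻¹ : ℝ) : ℂ) •
        (hρ.sqrt * Ed (B x a) * hρ.sqrt)) ≤ IR B := by
  set S := hρ.sqrt
  set p := (E ρ).trace.re
  have hS : Sᴴ = S := hρ.posSemidef_sqrt.1
  set T := ((p⁻¹ : ℝ) : ℂ) • (LinearMap.mulLeft ℂ Sᴴ ∘ₗ LinearMap.mulRight ℂ S ∘ₗ Ed)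
  have hT : PosMap T := ((hadj.posMap hE).conj S).smul (inv_nonneg.mpr hp.le)
  have hT1 : (T 1).trace = 1 := by
    have hSS : S * S = ρ := hρ.sqrt_mul_self
    have htr : (S * Ed 1 * S).trace = p := by
      rw [trace_mul_cycle, hSS, ← hρ.1.eq, ← hadj, (hE ρ hρ).1.eq, mul_one,
        (hE ρ hρ).ofReal_re_trace]
    simp [T, hS, ← mul_assoc, htr, hp.ne']
  convert sr_map_le_ir hT hT1 hB using 3 with x a
  simp [T, hS, mul_assoc]

/-- SR(ρ^{1/2} E†(B) ρ^{1/2} / p) ≤ IR(B) for a positive map E. -/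
theorem sr_filtered_heisenberg_le_ir {d na nx : ℕ}
    (B : Fin nx → Fin na → Matrix (Fin d) (Fin d) ℂ) (hB : IsMA B)
    (E Ed : Matrix (Fin d) (Fin d) ℂ →ₗ[ℂ] Matrix (Fin d) (Fin d) ℂ)
    (hE : PosMap E) (hadj : IsAdjoint E Ed)
    (ρ : Matrix (Fin d) (Fin d) ℂ) (hρ : ρ.PosSemidef) (hρ1 : ρ.trace = 1)
    (hp : 0 < (E ρ).trace.re) :
    SR (fun x a => ((((E ρ).trace.re)⁻¹ : ℝ) : ℂ) •
        (hρ.sqrt * Ed (B x a) * hρ.sqrt)) ≤ IR B :=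
  sr_filtered_heisenberg_le_ir_general B hB E Ed hE hadj ρ hρ hp
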